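/- arXiv:2408.10761 — 3 statements merged into one kernel-verified Lean document; each statement's English description precedes it below -/
import Mathlib

section
/- Let G = (V, E) be a finite simple graph, let ≺ be a strict total (linear) order on E, and let F ⊆ E be a set of edges such that the spanning subgraph (V, F) is acyclic (a forest). Let D ⊆ E be the set of all edges e such that, for at least one connected component S of (V, F) that has an outgoing edge, e is the ≺-minimal outgoing edge of S. Then the spanning subgraph (V, F ∪ D) is acyclic. -/
open SimpleGraph

open scoped Classical in
private lemma boruvka_exists_max {α : Type*} (lt : α → α → Prop) (P : α → Prop)
    (h_trans : ∀ a, P a → ∀ b, P b → ∀ c, P c → lt a b → lt b c → lt a c)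
    (h_total : ∀ a, P a → ∀ b, P b → a ≠ b → lt a b ∨ lt b a)
    (l : List α) (hl : ∀ x ∈ l, P x) (hne : l ≠ []) :
    ∃ e ∈ l, ∀ e' ∈ l, e' ≠ e → lt e' e := by
  induction l with
  | nil => exact absurd rfl hne
  | cons a l ih =>
    rcases eq_or_ne l [] with rfl | hl'
    · exact ⟨a, by simp, by simp +contextual⟩
    · obtain ⟨e, he, hmax⟩ := ih (fun x hx => hl x (List.mem_cons_of_mem _ hx)) hl'
      have hPe : P e := hl e (List.mem_cons_of_mem _ he)
      have hPa : P a := hl a (List.mem_cons_self)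
      by_cases hae : a = e
      · exact ⟨e, List.mem_cons_of_mem _ he, by
          intro e' he' hne'
          rcases List.mem_cons.mp he' with rfl | h
          · exact absurd hae hne'
          · exact hmax e' h hne'⟩
      · rcases h_total a hPa e hPe hae with h1 | h1
        · exact ⟨e, List.mem_cons_of_mem _ he, by
            intro e' he' hne'
            rcases List.mem_cons.mp he' with rfl | h
            · exact h1
            · exact hmax e' h hne'⟩
        · refine ⟨a, List.mem_cons_self, ?_⟩
          intro e' he' hne'
          rcases List.mem_cons.mp he' with rfl | h
          · exact absurd rfl hne'
          · by_cases he'e : e' = e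
            · exact he'e ▸ h1
            · exact h_trans e' (hl e' he') e hPe a hPa (hmax e' h he'e) h1

open scoped Classical in
private lemma boruvka_parity {V : Type*} (H : SimpleGraph V) (S : Set V)
    (f : Sym2 V → Bool)
    (hf : ∀ z, f z = true ↔ ∃ x y, z = s(x, y) ∧ x ∈ S ∧ y ∉ S)
    {a b : V} (w : H.Walk a b) :
    (w.edges.countP f) % 2 = if (a ∈ S) ↔ (b ∈ S) then 0 else 1 := by
  induction w with
  | nil => simp
  | @cons u v c h w ih =>
    rw [SimpleGraph.Walk.edges_cons, List.countP_cons]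
    have hcross : (∃ x y, s(u, v) = s(x, y) ∧ x ∈ S ∧ y ∉ S)
        ↔ ((u ∈ S ∧ v ∉ S) ∨ (v ∈ S ∧ u ∉ S)) := by
      constructor
      · rintro ⟨x, y, hxy, hx, hy⟩
        rw [Sym2.eq_iff] at hxy
        rcases hxy with ⟨rfl, rfl⟩ | ⟨rfl, rfl⟩
        · exact Or.inl ⟨hx, hy⟩
        · exact Or.inr ⟨hx, hy⟩
      · rintro (⟨h1, h2⟩ | ⟨h1, h2⟩)
        · exact ⟨u, v, rfl, h1, h2⟩
        · exact ⟨v, u, Sym2.eq_swap, h1, h2⟩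
    simp only [hf, hcross]
    by_cases huS : u ∈ S <;> by_cases hvS : v ∈ S <;> by_cases hcS : c ∈ S <;>
      simp only [huS, hvS, hcS, iff_true, iff_false, not_true_eq_false,
        not_false_eq_true, and_true, and_false, true_and, false_and, or_self,
        or_false, false_or, true_or, or_true, if_true, if_false,
        not_true, not_false_iff, true_iff, false_iff, and_self] at ih ⊢ <;>
      omega

open scoped Classical in
/-- Cycle avoidance in one Borůvka phase: given a finite simple graph `G`, a
strict total order `lt` on its edge set, and a forest `F ⊆ E(G)`, let `D` be
the set of edges that are the `lt`-minimal outgoing edge of some connected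
component of `(V, F)`.  Then `(V, F ∪ D)` is still acyclic. -/
theorem boruvka_phase_acyclic {V : Type*} [Fintype V] (G : SimpleGraph V)
    (lt : Sym2 V → Sym2 V → Prop)
    (h_irrefl : ∀ e ∈ G.edgeSet, ¬ lt e e)
    (h_trans : ∀ a ∈ G.edgeSet, ∀ b ∈ G.edgeSet, ∀ c ∈ G.edgeSet,
      lt a b → lt b c → lt a c)
    (h_total : ∀ a ∈ G.edgeSet, ∀ b ∈ G.edgeSet, a ≠ b → lt a b ∨ lt b a)
    (F : Set (Sym2 V)) (hF : F ⊆ G.edgeSet)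
    (hacyclic : (SimpleGraph.fromEdgeSet F).IsAcyclic)
    (Outgoing : Sym2 V → Set V → Prop)
    (hOut : ∀ e S, Outgoing e S ↔
      e ∈ G.edgeSet ∧ ∃ u v, e = s(u, v) ∧ u ∈ S ∧ v ∉ S)
    (D : Set (Sym2 V))
    (hD : D = {e | ∃ c : (SimpleGraph.fromEdgeSet F).ConnectedComponent,
        Outgoing e c.supp ∧ ∀ e', Outgoing e' c.supp → e' ≠ e → lt e e'}) :
    (SimpleGraph.fromEdgeSet (F ∪ D)).IsAcyclic := by
  classical
  set H := SimpleGraph.fromEdgeSet (F ∪ D) with hH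
  intro w p hp
  -- every edge of D is in G.edgeSet
  have hDG : D ⊆ G.edgeSet := by
    rintro e he
    rw [hD] at he
    obtain ⟨c, hout, -⟩ := he
    exact ((hOut e c.supp).mp hout).1
  -- edges of the cycle are in F ∪ D and not diagonal
  have hedges : ∀ e ∈ p.edges, e ∈ F ∪ D ∧ ¬ e.IsDiag := by
    intro e he
    have := p.edges_subset_edgeSet he
    rw [hH, SimpleGraph.edgeSet_fromEdgeSet] at this
    exact ⟨this.1, this.2⟩
  -- edges of D are not in F
  have hDF : ∀ e ∈ D, e ∉ F := by
    intro e heD heF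
    rw [hD] at heD
    obtain ⟨c, hout, -⟩ := heD
    obtain ⟨heG, u, v, rfl, hu, hv⟩ := (hOut _ c.supp).mp hout
    have huv : u ≠ v := (G.mem_edgeSet.mp heG).ne
    have hadj : (SimpleGraph.fromEdgeSet F).Adj u v := by
      rw [SimpleGraph.fromEdgeSet_adj]; exact ⟨heF, huv⟩
    have hmk : (SimpleGraph.fromEdgeSet F).connectedComponentMk v
        = (SimpleGraph.fromEdgeSet F).connectedComponentMk u :=
      SimpleGraph.ConnectedComponent.sound hadj.reachable.symm
    rw [SimpleGraph.ConnectedComponent.mem_supp_iff] at hu hv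
    exact hv (hmk.trans hu)
  -- there is an edge of the cycle in D
  have hne : ∃ e ∈ p.edges, e ∈ D := by
    by_contra h
    push_neg at h
    have hq : ∀ e ∈ p.edges, e ∈ (SimpleGraph.fromEdgeSet F).edgeSet := by
      intro e he
      rw [SimpleGraph.edgeSet_fromEdgeSet]
      obtain ⟨hFD, hdiag⟩ := hedges e he
      rcases hFD with h1 | h1
      · exact ⟨h1, hdiag⟩
      · exact absurd h1 (h e he)
    exact hacyclic (p.transfer _ hq) (hp.transfer hq)
  -- D-edges of the cycle
  set l : List (Sym2 V) := p.edges.filter (fun e => decide (e ∈ D)) with hl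
  have hlD : ∀ e ∈ l, e ∈ D := by
    intro e he
    simpa using (List.of_mem_filter he)
  have hlp : ∀ e ∈ l, e ∈ p.edges := fun e he => List.mem_of_mem_filter he
  have hlne : l ≠ [] := by
    obtain ⟨e, hep, heD⟩ := hne
    intro h0
    have : e ∈ l := List.mem_filter.mpr ⟨hep, by simpa using heD⟩
    simp [h0] at this
  -- max element
  obtain ⟨e, hel, hmax⟩ := boruvka_exists_max lt (· ∈ G.edgeSet)
    (fun a ha b hb c hc => h_trans a ha b hb c hc)
    (fun a ha b hb => h_total a ha b hb)
    l (fun x hx => hDG (hlD x hx)) hlne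
  have heD : e ∈ D := hlD e hel
  obtain ⟨c, hout, hmin⟩ := hD ▸ heD
  obtain ⟨heG, u, v, hsuv, hu, hv⟩ := (hOut e c.supp).mp hout
  set S := c.supp
  -- crossing predicate count on the cycle is even
  have hcross_e : (∃ x y, e = s(x, y) ∧ x ∈ S ∧ y ∉ S) := ⟨u, v, hsuv, hu, hv⟩
  set f : Sym2 V → Bool := fun z => decide (∃ x y, z = s(x, y) ∧ x ∈ S ∧ y ∉ S) with hf
  have hpar := boruvka_parity H S f (fun z => by simp [hf]) p
  rw [if_pos Iff.rfl] at hpar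
  have hef : e ∈ p.edges.filter f := by
    refine List.mem_filter.mpr ⟨hlp e hel, ?_⟩
    simpa [hf] using hcross_e
  have hnodup : (p.edges.filter f).Nodup := hp.edges_nodup.filter _
  have hlen : 2 ≤ (p.edges.filter f).length := by
    have h1 : 1 ≤ (p.edges.filter f).length :=
      List.length_pos_iff.mpr (List.ne_nil_of_mem hef)
    rw [← List.countP_eq_length_filter] at h1 ⊢
    omega
  -- get a second crossing edge
  have : ∃ e' ∈ p.edges.filter f, e' ≠ e := by
    by_contra h
    push_neg at h
    have hcount : (p.edges.filter f).count e = (p.edges.filter f).length :=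
      List.count_eq_length.mpr (fun x hx => (h x hx).symm)
    have := List.nodup_iff_count_le_one.mp hnodup e
    omega
  obtain ⟨e', he'f, he'ne⟩ := this
  have he'p : e' ∈ p.edges := List.mem_of_mem_filter he'f
  have he'cross : ∃ x y, e' = s(x, y) ∧ x ∈ S ∧ y ∉ S := by
    have := List.of_mem_filter he'f
    simpa [hf] using this
  obtain ⟨x, y, hxy, hx, hy⟩ := he'cross
  -- e' is in D
  have he'G : e' ∈ G.edgeSet → Outgoing e' S := by
    intro hG
    exact (hOut e' S).mpr ⟨hG, x, y, hxy, hx, hy⟩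
  have he'D : e' ∈ D := by
    obtain ⟨hFD, hdiag⟩ := hedges e' he'p
    rcases hFD with h1 | h1
    · -- e' ∈ F : contradiction, endpoints in same component
      exfalso
      have hxyne : x ≠ y := by
        intro h2
        exact hdiag (by rw [hxy, h2]; exact Sym2.isDiag_iff_proj_eq |>.mpr rfl)
      have hadj : (SimpleGraph.fromEdgeSet F).Adj x y := by
        rw [SimpleGraph.fromEdgeSet_adj]; exact ⟨hxy ▸ h1, hxyne⟩
      have : y ∈ S := by
        rw [SimpleGraph.ConnectedComponent.mem_supp_iff] at hx ⊢
        rw [← hx]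
        exact SimpleGraph.ConnectedComponent.sound hadj.reachable.symm
      exact hy this
    · exact h1
  have he'G' : e' ∈ G.edgeSet := hDG he'D
  -- minimality of e gives lt e e', maximality gives lt e' e
  have h1 : lt e e' := hmin e' (he'G he'G') he'ne
  have he'l : e' ∈ l := List.mem_filter.mpr ⟨he'p, by simpa using he'D⟩
  have h2 : lt e' e := hmax e' he'l he'ne
  exact h_irrefl e heG (h_trans e heG e' he'G' e heG h1 h2)
end

section
/- Let G = (V, E) be a finite connected simple graph, let w : E → ℤ_{>0} be an edge-weight function with positive integer values, and let H ⊆ E. Define a new weight function w′ : E → ℤ_{>0} by w′(e) = 2w(e) − 1 if e ∈ H and w′(e) = 2w(e) otherwise. Then every spanning tree T of G that is a minimum spanning tree of G with respect to w′ is also a minimum spanning tree of G with respect to w. -/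
open SimpleGraph

section Aux

variable {V : Type*} [DecidableEq V]

private lemma erase_graph_eq (S : Finset (Sym2 V)) (e : Sym2 V) :
    fromEdgeSet (↑(S.erase e) : Set (Sym2 V)) =
      fromEdgeSet (↑S : Set (Sym2 V)) \ fromEdgeSet {e} := by
  ext a b
  simp only [fromEdgeSet_adj, Finset.coe_erase, Set.mem_diff, Set.mem_singleton_iff, sdiff_adj,
    Finset.mem_coe]
  tauto

/-- Dichotomy: removing one edge `s(u,v)` from a graph, every walk endpoint pair remains
reachable, or the start can reach `u` or `v`. -/
private lemma reach_or {S : Finset (Sym2 V)} (u v : V) :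
    ∀ {x y : V}, (fromEdgeSet (↑S : Set (Sym2 V))).Walk x y →
    (fromEdgeSet (↑(S.erase s(u, v)) : Set (Sym2 V))).Reachable x y ∨
      (fromEdgeSet (↑(S.erase s(u, v)) : Set (Sym2 V))).Reachable x u ∨
      (fromEdgeSet (↑(S.erase s(u, v)) : Set (Sym2 V))).Reachable x v := by
  intro x y p
  induction p with
  | nil => exact Or.inl (Reachable.refl _)
  | @cons x z _ h q ih =>
    by_cases hxz : s(x, z) = s(u, v)
    · rcases Sym2.eq_iff.mp hxz with ⟨rfl, rfl⟩ | ⟨rfl, rfl⟩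
      · exact Or.inr (Or.inl (Reachable.refl _))
      · exact Or.inr (Or.inr (Reachable.refl _))
    · have hadj : (fromEdgeSet (↑(S.erase s(u, v)) : Set (Sym2 V))).Adj x z := by
        rw [fromEdgeSet_adj] at h ⊢
        exact ⟨by simp [Finset.mem_erase, hxz, h.1], h.2⟩
      rcases ih with h1 | h1 | h1
      · exact Or.inl (hadj.reachable.trans h1)
      · exact Or.inr (Or.inl (hadj.reachable.trans h1))
      · exact Or.inr (Or.inr (hadj.reachable.trans h1))

/-- Every vertex can still reach `u` or `v` after the edge `s(u,v)` is removed from a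
connected graph. -/
private lemma reach_or' {S : Finset (Sym2 V)} {u v x : V}
    (p : (fromEdgeSet (↑S : Set (Sym2 V))).Walk x u) :
    (fromEdgeSet (↑(S.erase s(u, v)) : Set (Sym2 V))).Reachable x u ∨
      (fromEdgeSet (↑(S.erase s(u, v)) : Set (Sym2 V))).Reachable x v := by
  rcases reach_or u v p with h | h | h
  · exact Or.inl h
  · exact Or.inl h
  · exact Or.inr h

/-- If after removing the edge `s(u,v)` the endpoints are still connected, then
removing the edge preserves all reachability. -/
private lemma reach_patch {S : Finset (Sym2 V)} {u v : V}
    (huv : (fromEdgeSet (↑(S.erase s(u, v)) : Set (Sym2 V))).Reachable u v) {x y : V}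
    (h : (fromEdgeSet (↑S : Set (Sym2 V))).Reachable x y) :
    (fromEdgeSet (↑(S.erase s(u, v)) : Set (Sym2 V))).Reachable x y := by
  obtain ⟨p⟩ := h
  induction p with
  | nil => exact Reachable.refl _
  | @cons x z _ h q ih =>
    by_cases hxz : s(x, z) = s(u, v)
    · rcases Sym2.eq_iff.mp hxz with ⟨rfl, rfl⟩ | ⟨rfl, rfl⟩
      · exact huv.trans ih
      · exact huv.symm.trans ih
    · have hadj : (fromEdgeSet (↑(S.erase s(u, v)) : Set (Sym2 V))).Adj x z := by
        rw [fromEdgeSet_adj] at h ⊢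
        exact ⟨by simp [Finset.mem_erase, hxz, h.1], h.2⟩
      exact hadj.reachable.trans ih

/-- A trail from a `P`-vertex to a non-`P`-vertex crosses the boundary at some edge `s(a,b)`,
and avoiding that edge we can still reach `a` from the start and `y` from `b`. -/
private lemma cross {S : Finset (Sym2 V)} (P : V → Prop) :
    ∀ {x y : V} (p : (fromEdgeSet (↑S : Set (Sym2 V))).Walk x y), p.IsTrail → P x → ¬ P y →
    ∃ a b, P a ∧ ¬ P b ∧ s(a, b) ∈ S ∧ s(a, b) ∈ p.edges ∧
      (fromEdgeSet (↑(S.erase s(a, b)) : Set (Sym2 V))).Reachable x a ∧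
      (fromEdgeSet (↑(S.erase s(a, b)) : Set (Sym2 V))).Reachable b y := by
  intro x y p
  induction p with
  | nil => intro _ hx hy; exact absurd hx hy
  | @cons x z y h q ih =>
    intro ht hx hy
    have hq : q.IsTrail := ((Walk.isTrail_cons h q).mp ht).1
    have hxzq : s(x, z) ∉ q.edges := ((Walk.isTrail_cons h q).mp ht).2
    by_cases hz : P z
    · obtain ⟨a, b, ha, hb, habS, habe, h1, h2⟩ := ih hq hz hy
      have hne : s(x, z) ≠ s(a, b) := fun hh => hxzq (hh ▸ habe)
      have hadj : (fromEdgeSet (↑(S.erase s(a, b)) : Set (Sym2 V))).Adj x z := by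
        rw [fromEdgeSet_adj] at h ⊢
        exact ⟨by simp [Finset.mem_erase, hne, h.1], h.2⟩
      exact ⟨a, b, ha, hb, habS, by simp [habe], hadj.reachable.trans h1, h2⟩
    · have hxzS : s(x, z) ∈ S := by
        rw [fromEdgeSet_adj] at h; exact h.1
      refine ⟨x, z, hx, hz, hxzS, by simp, Reachable.refl _, ?_⟩
      refine ⟨q.transfer _ fun e' he' => ?_⟩
      have h1 := q.edges_subset_edgeSet he'
      rw [edgeSet_fromEdgeSet] at h1 ⊢
      refine ⟨?_, h1.2⟩
      have hne : e' ≠ s(x, z) := fun hh => hxzq (hh ▸ he')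
      simp only [Finset.coe_erase, Set.mem_diff, Set.mem_singleton_iff]
      exact ⟨h1.1, hne⟩

variable [Fintype V]

set_option linter.unusedSectionVars false

private lemma tree_card {T : Finset (Sym2 V)} (hd : ∀ e ∈ T, ¬ e.IsDiag)
    (ht : (fromEdgeSet (↑T : Set (Sym2 V))).IsTree) : T.card + 1 = Fintype.card V := by
  classical
  have hE : (fromEdgeSet (↑T : Set (Sym2 V))).edgeSet = ↑T := by
    rw [edgeSet_fromEdgeSet]
    ext e
    simp only [Set.mem_diff, Finset.mem_coe, Set.mem_setOf_eq, and_iff_left_iff_imp]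
    exact fun he => hd e he
  haveI : Fintype (fromEdgeSet (↑T : Set (Sym2 V))).edgeSet :=
    Fintype.ofFinset T (by simp [hE])
  have h2 := ht.card_edgeFinset
  have h3 : (fromEdgeSet (↑T : Set (Sym2 V))).edgeFinset = T := by
    ext e; simp [edgeFinset, hE]
  rwa [h3] at h2

private lemma card_lower (n : ℕ) :
    ∀ (S : Finset (Sym2 V)), S.card = n → (∀ e ∈ S, ¬ e.IsDiag) →
      (fromEdgeSet (↑S : Set (Sym2 V))).Connected → Fintype.card V ≤ S.card + 1 := by
  induction n using Nat.strong_induction_on with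
  | _ n ih =>
    intro S hSn hd hconn
    by_cases hac : (fromEdgeSet (↑S : Set (Sym2 V))).IsAcyclic
    · exact le_of_eq (tree_card hd ⟨hconn, hac⟩).symm
    · rw [isAcyclic_iff_forall_adj_isBridge] at hac
      push_neg at hac
      obtain ⟨v, w, hadj, hnb⟩ := hac
      rw [isBridge_iff] at hnb
      push_neg at hnb
      have hreach : (fromEdgeSet (↑(S.erase s(v, w)) : Set (Sym2 V))).Reachable v w := by
        rw [erase_graph_eq]; exact hnb
      have hvwS : s(v, w) ∈ S := by
        rw [fromEdgeSet_adj] at hadj; exact hadj.1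
      haveI hne : Nonempty V := hconn.nonempty
      have hconn' : (fromEdgeSet (↑(S.erase s(v, w)) : Set (Sym2 V))).Connected :=
        Connected.mk fun x y => reach_patch hreach (hconn.preconnected x y)
      have hd' : ∀ e ∈ S.erase s(v, w), ¬ e.IsDiag := fun e he => hd e (Finset.mem_of_mem_erase he)
      have hlt : (S.erase s(v, w)).card < S.card := Finset.card_erase_lt_of_mem hvwS
      have := ih (S.erase s(v, w)).card (by omega) (S.erase s(v, w)) rfl hd' hconn'
      omega

private lemma tree_of_card {S : Finset (Sym2 V)} (hd : ∀ e ∈ S, ¬ e.IsDiag)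
    (hconn : (fromEdgeSet (↑S : Set (Sym2 V))).Connected)
    (hcard : S.card + 1 = Fintype.card V) :
    (fromEdgeSet (↑S : Set (Sym2 V))).IsTree := by
  refine ⟨hconn, ?_⟩
  by_contra hac
  rw [isAcyclic_iff_forall_adj_isBridge] at hac
  push_neg at hac
  obtain ⟨v, w, hadj, hnb⟩ := hac
  rw [isBridge_iff] at hnb
  push_neg at hnb
  have hreach : (fromEdgeSet (↑(S.erase s(v, w)) : Set (Sym2 V))).Reachable v w := by
    rw [erase_graph_eq]; exact hnb
  have hvwS : s(v, w) ∈ S := by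
    rw [fromEdgeSet_adj] at hadj; exact hadj.1
  haveI hne : Nonempty V := hconn.nonempty
  have hconn' : (fromEdgeSet (↑(S.erase s(v, w)) : Set (Sym2 V))).Connected :=
    Connected.mk fun x y => reach_patch hreach (hconn.preconnected x y)
  have hd' : ∀ e ∈ S.erase s(v, w), ¬ e.IsDiag := fun e he => hd e (Finset.mem_of_mem_erase he)
  have h1 := card_lower (S.erase s(v, w)).card (S.erase s(v, w)) rfl hd' hconn'
  have h2 : (S.erase s(v, w)).card = S.card - 1 := Finset.card_erase_of_mem hvwS
  have h3 : 1 ≤ S.card := Finset.card_pos.mpr ⟨_, hvwS⟩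
  omega

end Aux

/-- `T` is a spanning tree of `G`, given as a set of edges. -/
def IsSpanningTreeOf {V : Type*} (G : SimpleGraph V) (T : Finset (Sym2 V)) : Prop :=
  ↑T ⊆ G.edgeSet ∧ (SimpleGraph.fromEdgeSet (↑T : Set (Sym2 V))).IsTree

/-- `T` is a minimum spanning tree of `G` with respect to the weights `w`. -/
def IsMSTOf {V : Type*} (G : SimpleGraph V) (w : Sym2 V → ℤ)
    (T : Finset (Sym2 V)) : Prop :=
  IsSpanningTreeOf G T ∧
    ∀ T' : Finset (Sym2 V), IsSpanningTreeOf G T' → ∑ e ∈ T, w e ≤ ∑ e ∈ T', w e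

section Exchange

set_option linter.unusedSectionVars false

variable {V : Type*} [DecidableEq V] [Fintype V] {G : SimpleGraph V}

private lemma spanning_diag {T : Finset (Sym2 V)} (h : IsSpanningTreeOf G T) :
    ∀ e ∈ T, ¬ e.IsDiag := fun e he => G.not_isDiag_of_mem_edgeSet (h.1 he)

private lemma spanning_card {T : Finset (Sym2 V)} (h : IsSpanningTreeOf G T) :
    T.card + 1 = Fintype.card V := tree_card (spanning_diag h) h.2

private lemma exchange {T T' : Finset (Sym2 V)}
    (hT : IsSpanningTreeOf G T) (hT' : IsSpanningTreeOf G T') {e : Sym2 V}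
    (heT : e ∈ T) (heT' : e ∉ T') :
    ∃ f ∈ T', f ∉ T ∧ IsSpanningTreeOf G (insert f (T.erase e)) ∧
      IsSpanningTreeOf G (insert e (T'.erase f)) := by
  revert heT heT'
  induction e using Sym2.ind with
  | _ u v =>
  intro heT heT'
  have huv : u ≠ v := by
    have h := hT.1 heT
    rw [SimpleGraph.mem_edgeSet] at h
    exact h.ne
  -- the edge s(u,v) is a bridge of T
  have hadjT : (fromEdgeSet (↑T : Set (Sym2 V))).Adj u v := by
    rw [fromEdgeSet_adj]; exact ⟨heT, huv⟩
  have hbr := isAcyclic_iff_forall_adj_isBridge.mp hT.2.IsAcyclic hadjT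
  rw [isBridge_iff] at hbr
  have hKuv : ¬ (fromEdgeSet (↑(T.erase s(u, v)) : Set (Sym2 V))).Reachable u v := by
    rw [erase_graph_eq]; exact hbr
  -- dichotomy for T minus e
  have hdi : ∀ x, (fromEdgeSet (↑(T.erase s(u, v)) : Set (Sym2 V))).Reachable x u ∨
      (fromEdgeSet (↑(T.erase s(u, v)) : Set (Sym2 V))).Reachable x v := by
    intro x
    obtain ⟨p⟩ := hT.2.isConnected.preconnected x u
    exact reach_or' p
  -- a path from u to v in T'
  obtain ⟨p0⟩ := hT'.2.isConnected.preconnected u v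
  obtain ⟨a, b, ha, hb, habT', -, hra, hrb⟩ :=
    cross (fun x => (fromEdgeSet (↑(T.erase s(u, v)) : Set (Sym2 V))).Reachable x u)
      p0.toPath.val p0.toPath.prop.isTrail (Reachable.refl _) (fun h => hKuv h.symm)
  have hbv : (fromEdgeSet (↑(T.erase s(u, v)) : Set (Sym2 V))).Reachable b v :=
    (hdi b).resolve_left hb
  have hab : a ≠ b := fun h => hb (h ▸ ha)
  have hfT : s(a, b) ∉ T := by
    intro hfT
    have hfe : s(a, b) ≠ s(u, v) := fun h => heT' (h ▸ habT')
    have hadj : (fromEdgeSet (↑(T.erase s(u, v)) : Set (Sym2 V))).Adj a b := by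
      rw [fromEdgeSet_adj]
      exact ⟨by simp [Finset.mem_erase, hfe, hfT], hab⟩
    exact hb (hadj.symm.reachable.trans ha)
  haveI hne : Nonempty V := hT.2.isConnected.nonempty
  refine ⟨s(a, b), habT', hfT, ?_, ?_⟩
  · -- T₂ = T - e + f is a spanning tree
    have hsub : ↑(insert s(a, b) (T.erase s(u, v))) ⊆ G.edgeSet := by
      intro x hx
      simp only [Finset.coe_insert, Set.mem_insert_iff, Finset.coe_erase, Set.mem_diff,
        Finset.mem_coe] at hx
      rcases hx with rfl | ⟨hx, -⟩
      · exact hT'.1 habT'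
      · exact hT.1 hx
    have hmono : fromEdgeSet (↑(T.erase s(u, v)) : Set (Sym2 V)) ≤
        fromEdgeSet (↑(insert s(a, b) (T.erase s(u, v))) : Set (Sym2 V)) :=
      fromEdgeSet_mono (by exact_mod_cast Finset.subset_insert _ _)
    have hMab : (fromEdgeSet (↑(insert s(a, b) (T.erase s(u, v))) : Set (Sym2 V))).Adj a b := by
      rw [fromEdgeSet_adj]
      exact ⟨by simp, hab⟩
    have hMuv : (fromEdgeSet (↑(insert s(a, b) (T.erase s(u, v))) : Set (Sym2 V))).Reachable u v :=
      (ha.mono hmono).symm.trans (hMab.reachable.trans (hbv.mono hmono))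
    have hconn : (fromEdgeSet (↑(insert s(a, b) (T.erase s(u, v))) : Set (Sym2 V))).Connected := by
      refine Connected.mk fun x y => ?_
      have hx : (fromEdgeSet (↑(insert s(a, b) (T.erase s(u, v))) : Set (Sym2 V))).Reachable x u := by
        rcases hdi x with h1 | h1
        · exact h1.mono hmono
        · exact (h1.mono hmono).trans hMuv.symm
      have hy : (fromEdgeSet (↑(insert s(a, b) (T.erase s(u, v))) : Set (Sym2 V))).Reachable y u := by
        rcases hdi y with h1 | h1
        · exact h1.mono hmono
        · exact (h1.mono hmono).trans hMuv.symm
      exact hx.trans hy.symm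
    have hcard : (insert s(a, b) (T.erase s(u, v))).card + 1 = Fintype.card V := by
      have h1 : s(a, b) ∉ T.erase s(u, v) := fun h => hfT (Finset.mem_of_mem_erase h)
      have h2 := Finset.card_insert_of_notMem h1
      have h3 := Finset.card_erase_of_mem heT
      have h4 : 1 ≤ T.card := Finset.card_pos.mpr ⟨_, heT⟩
      have h5 := spanning_card hT
      omega
    exact ⟨hsub, tree_of_card (fun e' he' => G.not_isDiag_of_mem_edgeSet (hsub he')) hconn hcard⟩
  · -- T₃ = T' - f + e is a spanning tree
    have hsub : ↑(insert s(u, v) (T'.erase s(a, b))) ⊆ G.edgeSet := by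
      intro x hx
      simp only [Finset.coe_insert, Set.mem_insert_iff, Finset.coe_erase, Set.mem_diff,
        Finset.mem_coe] at hx
      rcases hx with rfl | ⟨hx, -⟩
      · exact hT.1 heT
      · exact hT'.1 hx
    have hmono : fromEdgeSet (↑(T'.erase s(a, b)) : Set (Sym2 V)) ≤
        fromEdgeSet (↑(insert s(u, v) (T'.erase s(a, b))) : Set (Sym2 V)) :=
      fromEdgeSet_mono (by exact_mod_cast Finset.subset_insert _ _)
    have hMuv : (fromEdgeSet (↑(insert s(u, v) (T'.erase s(a, b))) : Set (Sym2 V))).Adj u v := by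
      rw [fromEdgeSet_adj]
      exact ⟨by simp, huv⟩
    have hMab : (fromEdgeSet (↑(insert s(u, v) (T'.erase s(a, b))) : Set (Sym2 V))).Reachable a b :=
      (hra.mono hmono).symm.trans (hMuv.reachable.trans (hrb.mono hmono).symm)
    have hdi' : ∀ x, (fromEdgeSet (↑(T'.erase s(a, b)) : Set (Sym2 V))).Reachable x a ∨
        (fromEdgeSet (↑(T'.erase s(a, b)) : Set (Sym2 V))).Reachable x b := by
      intro x
      obtain ⟨p⟩ := hT'.2.isConnected.preconnected x a
      exact reach_or' p
    have hconn : (fromEdgeSet (↑(insert s(u, v) (T'.erase s(a, b))) : Set (Sym2 V))).Connected := by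
      refine Connected.mk fun x y => ?_
      have hx : (fromEdgeSet (↑(insert s(u, v) (T'.erase s(a, b))) : Set (Sym2 V))).Reachable x a := by
        rcases hdi' x with h1 | h1
        · exact h1.mono hmono
        · exact (h1.mono hmono).trans hMab.symm
      have hy : (fromEdgeSet (↑(insert s(u, v) (T'.erase s(a, b))) : Set (Sym2 V))).Reachable y a := by
        rcases hdi' y with h1 | h1
        · exact h1.mono hmono
        · exact (h1.mono hmono).trans hMab.symm
      exact hx.trans hy.symm
    have hcard : (insert s(u, v) (T'.erase s(a, b))).card + 1 = Fintype.card V := by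
      have h1 : s(u, v) ∉ T'.erase s(a, b) := fun h => heT' (Finset.mem_of_mem_erase h)
      have h2 := Finset.card_insert_of_notMem h1
      have h3 := Finset.card_erase_of_mem habT'
      have h4 : 1 ≤ T'.card := Finset.card_pos.mpr ⟨_, habT'⟩
      have h5 := spanning_card hT'
      omega
    exact ⟨hsub, tree_of_card (fun e' he' => G.not_isDiag_of_mem_edgeSet (hsub he')) hconn hcard⟩

end Exchange

/-- MST verification weight modification: for a finite connected graph `G` with
positive integer edge weights `w` and a set `H` of edges, define
`w′(e) = 2 w(e) − 1` for `e ∈ H` and `w′(e) = 2 w(e)` otherwise.  Then every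
minimum spanning tree of `G` with respect to `w′` is also a minimum spanning
tree with respect to `w`. -/
theorem mst_of_perturbed_weights {V : Type*} [Fintype V]
    (G : SimpleGraph V) (hG : G.Connected)
    (w : Sym2 V → ℤ) (hw : ∀ e ∈ G.edgeSet, 0 < w e)
    (H : Set (Sym2 V)) (hH : H ⊆ G.edgeSet)
    (w' : Sym2 V → ℤ)
    (hw'H : ∀ e ∈ H, w' e = 2 * w e - 1)
    (hw'nH : ∀ e ∉ H, w' e = 2 * w e) :
    ∀ T : Finset (Sym2 V), IsMSTOf G w' T → IsMSTOf G w T := by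
  classical
  rintro T ⟨hTspan, hTopt⟩
  suffices main : ∀ n (T' : Finset (Sym2 V)), IsSpanningTreeOf G T' → (T \ T').card = n →
      ∑ e ∈ T, w e ≤ ∑ e ∈ T', w e by
    exact ⟨hTspan, fun T' h => main _ T' h rfl⟩
  intro n
  induction n using Nat.strong_induction_on with
  | _ n ih =>
    intro T' hT' hcard
    by_cases hempty : T \ T' = ∅
    · have hsub := Finset.sdiff_eq_empty_iff_subset.mp hempty
      have hc : T'.card ≤ T.card := by
        have h1 := spanning_card hTspan
        have h2 := spanning_card hT'
        omega
      rw [Finset.eq_of_subset_of_card_le hsub hc]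
    · obtain ⟨e, he⟩ := Finset.nonempty_iff_ne_empty.mpr hempty
      have heT : e ∈ T := (Finset.mem_sdiff.mp he).1
      have heT' : e ∉ T' := (Finset.mem_sdiff.mp he).2
      obtain ⟨f, hfT', hfT, hTree2, hTree3⟩ := exchange hTspan hT' heT heT'
      -- From w'-optimality against T₂ = T - e + f, deduce w' e ≤ w' f.
      have hopt := hTopt _ hTree2
      have hfne : f ∉ T.erase e := fun h => hfT (Finset.mem_of_mem_erase h)
      rw [Finset.sum_insert hfne] at hopt
      have hsum1 := Finset.add_sum_erase T w' heT
      have hw'ef : w' e ≤ w' f := by linarith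
      have hwef : w e ≤ w f := by
        by_cases heH : e ∈ H <;> by_cases hfH : f ∈ H <;>
          simp only [hw'H, hw'nH, heH, hfH, not_false_iff] at hw'ef <;> omega
      -- Apply induction to T₃ = T' - f + e.
      have hkey : T \ insert e (T'.erase f) = (T \ T').erase e := by
        ext x
        simp only [Finset.mem_sdiff, Finset.mem_insert, Finset.mem_erase]
        constructor
        · rintro ⟨hxT, hx⟩
          push_neg at hx
          exact ⟨hx.1, hxT, hx.2 (fun hh => hfT (hh ▸ hxT))⟩
        · rintro ⟨hxe, hxT, hxT'⟩
          refine ⟨hxT, ?_⟩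
          push_neg
          exact ⟨hxe, fun _ => hxT'⟩
      have hlt : (T \ insert e (T'.erase f)).card < n := by
        rw [hkey, ← hcard]
        exact Finset.card_erase_lt_of_mem he
      have hIH := ih _ hlt _ hTree3 rfl
      have hene : e ∉ T'.erase f := fun h => heT' (Finset.mem_of_mem_erase h)
      rw [Finset.sum_insert hene] at hIH
      have hsum2 := Finset.add_sum_erase T' w hfT'
      linarith
end

section
/- Let G = (V, E) be a finite connected simple graph, let κ ≥ 1 be an integer, let H ⊆ E, and let 𝒫 be a partition of V into clusters such that each cluster S ∈ 𝒫 has a designated center c(S) ∈ S with d_H(v, c(S)) ≤ κ − 1 for every v ∈ S. Suppose that for every edge {u, v} ∈ E whose endpoints lie in different clusters, H contains an edge joining u to some node in v's cluster, or H contains an edge joining v to some node in u's cluster. Then d_H(u, v) ≤ 2κ − 1 for every edge {u, v} ∈ E; consequently, H is a (2κ − 1)-spanner of G. -/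
open SimpleGraph

private lemma walk_bound {V : Type*} {G H' : SimpleGraph V} (c : ℕ∞)
    (hedge : ∀ u v : V, G.Adj u v → H'.edist u v ≤ c) :
    ∀ {u v : V} (p : G.Walk u v), H'.edist u v ≤ c * p.length := by
  intro u v p
  induction p with
  | nil => simp
  | cons h p ih =>
    calc H'.edist _ _ ≤ H'.edist _ _ + H'.edist _ _ := SimpleGraph.edist_triangle
    _ ≤ c + c * p.length := add_le_add (hedge _ _ h) ih
    _ = c * (p.length + 1) := by ring
    _ = c * _ := by rw [SimpleGraph.Walk.length_cons]; push_cast; ring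

/-- Stretch analysis of the cluster-based spanner: let `G` be a finite connected
graph, `H ⊆ E(G)`, and let `P` be a partition of the vertices into clusters,
each cluster `S` having a center `c(S) ∈ S` with `d_H(v, c(S)) ≤ κ − 1` for all
`v ∈ S`.  If for every edge `{u, v}` of `G` crossing two distinct clusters, `H`
contains an edge joining `u` to some node of `v`'s cluster or an edge joining
`v` to some node of `u`'s cluster, then `d_H(u, v) ≤ 2κ − 1` for every edge
`{u, v}` of `G`; consequently `H` is a `(2κ − 1)`-spanner of `G`. -/
theorem cluster_partition_spanner {V : Type*} [Fintype V]
    (G : SimpleGraph V) (hG : G.Connected) (κ : ℕ) (hκ : 1 ≤ κ)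
    (H : Set (Sym2 V)) (hH : H ⊆ G.edgeSet)
    (P : Set (Set V)) (hP : Setoid.IsPartition P)
    (center : Set V → V)
    (hcmem : ∀ S ∈ P, center S ∈ S)
    (hcdist : ∀ S ∈ P, ∀ v ∈ S,
      (SimpleGraph.fromEdgeSet H).edist v (center S) ≤ ((κ - 1 : ℕ) : ℕ∞))
    (hbridge : ∀ u v : V, G.Adj u v → ∀ S ∈ P, ∀ S' ∈ P,
      u ∈ S → v ∈ S' → S ≠ S' →
      (∃ x ∈ S', s(u, x) ∈ H) ∨ (∃ y ∈ S, s(v, y) ∈ H)) :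
    (∀ u v : V, G.Adj u v →
      (SimpleGraph.fromEdgeSet H).edist u v ≤ ((2 * κ - 1 : ℕ) : ℕ∞)) ∧
    (∀ u v : V,
      (SimpleGraph.fromEdgeSet H).edist u v
        ≤ ((2 * κ - 1 : ℕ) : ℕ∞) * G.edist u v) := by
  set H' := SimpleGraph.fromEdgeSet H with hH'
  -- key fact: H edges give adjacency in H'
  have hadjH : ∀ {a b : V}, s(a, b) ∈ H → H'.Adj a b := by
    intro a b hab
    have hne : a ≠ b := G.ne_of_adj ((SimpleGraph.mem_edgeSet G).mp (hH hab))
    exact (SimpleGraph.fromEdgeSet_adj ..).mpr ⟨hab, hne⟩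
  -- center distance via symmetry
  have hcdist' : ∀ S ∈ P, ∀ v ∈ S, H'.edist (center S) v ≤ ((κ - 1 : ℕ) : ℕ∞) := by
    intro S hS v hv
    rw [SimpleGraph.edist_comm]; exact hcdist S hS v hv
  have key : ∀ u v : V, G.Adj u v →
      H'.edist u v ≤ ((2 * κ - 1 : ℕ) : ℕ∞) := by
    intro u v huv
    obtain ⟨S, ⟨hS, hu⟩, -⟩ := hP.2 u
    obtain ⟨S', ⟨hS', hv⟩, -⟩ := hP.2 v
    by_cases hSS : S = S'
    · subst hSS
      have : H'.edist u v ≤ H'.edist u (center S) + H'.edist (center S) v :=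
        SimpleGraph.edist_triangle
      refine this.trans ?_
      calc H'.edist u (center S) + H'.edist (center S) v
          ≤ ((κ - 1 : ℕ) : ℕ∞) + ((κ - 1 : ℕ) : ℕ∞) :=
            add_le_add (hcdist S hS u hu) (hcdist' S hS v hv)
        _ ≤ ((2 * κ - 1 : ℕ) : ℕ∞) := by
            rw [← Nat.cast_add]; exact_mod_cast by omega
    · have hb := hbridge u v huv S hS S' hS' hu hv hSS
      -- in either case, bound by 1 + (κ-1) + (κ-1)
      have main : ∀ (a b : V) (T : Set V), T ∈ P → a ∈ T → b ∈ T →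
          ∀ w : V, H'.Adj w a → H'.edist w b ≤ ((2 * κ - 1 : ℕ) : ℕ∞) := by
        intro a b T hT ha hb' w hw
        calc H'.edist w b ≤ H'.edist w a + H'.edist a b := SimpleGraph.edist_triangle
          _ ≤ H'.edist w a + (H'.edist a (center T) + H'.edist (center T) b) :=
              add_le_add_right SimpleGraph.edist_triangle _
          _ ≤ 1 + (((κ - 1 : ℕ) : ℕ∞) + ((κ - 1 : ℕ) : ℕ∞)) :=
              add_le_add (by simpa using SimpleGraph.edist_le hw.toWalk)
                (add_le_add (hcdist T hT a ha) (hcdist' T hT b hb'))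
          _ ≤ ((2 * κ - 1 : ℕ) : ℕ∞) := by
              rw [← Nat.cast_add, ← Nat.cast_one, ← Nat.cast_add]
              exact_mod_cast by omega
      rcases hb with ⟨x, hx, hxH⟩ | ⟨y, hy, hyH⟩
      · exact main x v S' hS' hx hv u (hadjH hxH)
      · rw [SimpleGraph.edist_comm]
        exact main y u S hS hy hu v (hadjH hyH)
  refine ⟨key, fun u v => ?_⟩
  obtain ⟨p, hp⟩ := (hG u v).exists_walk_length_eq_edist
  calc H'.edist u v ≤ ((2 * κ - 1 : ℕ) : ℕ∞) * p.length := walk_bound _ key p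
    _ = ((2 * κ - 1 : ℕ) : ℕ∞) * G.edist u v := by rw [hp]
end
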